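/- arXiv:1807.06062 — 8 statements merged into one kernel-verified Lean document; each statement's English description precedes it below -/
import Mathlib

section
/- Let X = [[A, B], [Bᵀ, D]] be a symmetric real n×n matrix satisfying Xᵀ I_{p,q} X = I_{p,q}, with A of size p×p and D of size q×q. Then X is positive definite if and only if both diagonal blocks A and D are positive definite. -/
/-!
Comparing blocks in `Xᵀ J X = J`, with `J = diag(1, -1)`, gives `A² - B Bᵀ = 1` and `A B = B D`.
Hence the Schur complement of `D` in `X` is `A - B D⁻¹ Bᵀ = A⁻¹`. If `A` and `D` are positive
definite, `X` is therefore positive semidefinite, and it is invertible because `J` is, so it is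
positive definite. The converse holds because diagonal blocks are principal submatrices.
-/

open Matrix

namespace Matrix

variable {m n R : Type*}

theorem PosDef.toBlocks₁₁ [Ring R] [PartialOrder R] [StarRing R]
    {M : Matrix (m ⊕ n) (m ⊕ n) R} (hM : M.PosDef) : M.toBlocks₁₁.PosDef :=
  hM.submatrix Sum.inl_injective

theorem PosDef.toBlocks₂₂ [Ring R] [PartialOrder R] [StarRing R]
    {M : Matrix (m ⊕ n) (m ⊕ n) R} (hM : M.PosDef) : M.toBlocks₂₂.PosDef :=
  hM.submatrix Sum.inr_injective

variable [Fintype m] [Fintype n] [CommRing R] [DecidableEq m] [DecidableEq n]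

theorem isUnit_of_transpose_mul_mul_eq_self {X J : Matrix m m R} (h : Xᵀ * J * X = J)
    (hJ : IsUnit J) : IsUnit X := by
  rw [isUnit_iff_isUnit_det] at hJ ⊢
  have hdet : X.det * (Xᵀ.det * J.det) = J.det := by
    rw [← det_mul, mul_comm, ← det_mul, h]
  exact isUnit_of_mul_isUnit_left (hdet ▸ hJ)

theorem isUnit_fromBlocks_one_zero_zero_neg_one :
    IsUnit (fromBlocks 1 0 0 (-1) : Matrix (m ⊕ n) (m ⊕ n) R) :=
  .of_mul_eq_one (fromBlocks 1 0 0 (-1)) (by simp [fromBlocks_multiply])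

theorem block_relations_of_transpose_mul_mul_eq {A : Matrix m m R} {B : Matrix m n R}
    {D : Matrix n n R} (hA : A.IsSymm) (hD : D.IsSymm)
    (hX : (fromBlocks A B Bᵀ D)ᵀ * fromBlocks 1 0 0 (-1) * fromBlocks A B Bᵀ D =
      fromBlocks 1 0 0 (-1)) :
    A * A - B * Bᵀ = 1 ∧ A * B = B * D := by
  rw [fromBlocks_transpose, hA.eq, hD.eq, transpose_transpose] at hX
  simp only [fromBlocks_multiply, fromBlocks_inj, Matrix.mul_one, Matrix.mul_zero,
    Matrix.mul_neg, add_zero, zero_add, Matrix.neg_mul] at hX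
  obtain ⟨h₁₁, h₁₂, -, -⟩ := hX
  exact ⟨by rwa [sub_eq_add_neg], sub_eq_zero.mp (by rwa [sub_eq_add_neg])⟩

theorem sub_mul_inv_mul_eq_inv {A : Matrix m m R} {B : Matrix m n R} {C : Matrix n m R}
    {D : Matrix n n R} [Invertible D] (hAA : A * A - B * C = 1) (hAB : A * B = B * D) :
    A - B * D⁻¹ * C = A⁻¹ := by
  refine (inv_eq_right_inv ?_).symm
  calc A * (A - B * D⁻¹ * C) = A * A - B * (D * D⁻¹) * C := by
        rw [Matrix.mul_sub, ← Matrix.mul_assoc, ← Matrix.mul_assoc, hAB, Matrix.mul_assoc B]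
    _ = 1 := by rw [mul_inv_of_invertible, Matrix.mul_one, hAA]

end Matrix

theorem stmt_1 {p q : ℕ}
    (A : Matrix (Fin p) (Fin p) ℝ) (B : Matrix (Fin p) (Fin q) ℝ)
    (D : Matrix (Fin q) (Fin q) ℝ) (hA : A.IsSymm) (hD : D.IsSymm)
    (hX : (fromBlocks A B Bᵀ D)ᵀ * fromBlocks 1 0 0 (-1) * fromBlocks A B Bᵀ D =
      fromBlocks 1 0 0 (-1)) :
    (fromBlocks A B Bᵀ D).PosDef ↔ A.PosDef ∧ D.PosDef := by
  obtain ⟨hAA, hAB⟩ := block_relations_of_transpose_mul_mul_eq hA hD hX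
  have hXunit := isUnit_of_transpose_mul_mul_eq_self hX isUnit_fromBlocks_one_zero_zero_neg_one
  refine ⟨fun hXpos => ⟨hXpos.toBlocks₁₁, hXpos.toBlocks₂₂⟩, fun ⟨hApos, hDpos⟩ => ?_⟩
  have := hDpos.isUnit.invertible
  have hschur : A - B * D⁻¹ * Bᴴ = A⁻¹ := by
    rw [conjTranspose_eq_transpose_of_trivial]
    exact sub_mul_inv_mul_eq_inv hAA hAB
  refine (PosSemidef.posDef_iff_isUnit ?_).mpr hXunit
  rw [← conjTranspose_eq_transpose_of_trivial, PosDef.fromBlocks₂₂ A B hDpos, hschur]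
  exact hApos.inv.posSemidef
end

section
/- Let X = [[A, B], [Bᵀ, D]] be a symmetric real matrix satisfying Xᵀ I_{p,q} X = I_{p,q}, with A and D positive definite. Then the Schur complement of A in X equals D⁻¹, i.e., D - Bᵀ A⁻¹ B = D⁻¹. -/
/-!
Reading off the lower blocks of `Xᵀ J X = J` gives `Bᵀ A = Dᵀ C` and `Dᵀ D - Bᵀ B = 1`.
Multiplying the Schur complement on the left by `Dᵀ` then yields
`Dᵀ D - Dᵀ C A⁻¹ B = Dᵀ D - Bᵀ A A⁻¹ B = Dᵀ D - Bᵀ B = 1`, so it is the inverse of `Dᵀ = D`.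
-/

open Matrix

namespace Matrix

variable {m n R : Type*} [Fintype m] [Fintype n] [DecidableEq m] [DecidableEq n]

theorem lower_blocks_of_transpose_mul_indefinite_mul_self [Ring R]
    {A : Matrix m m R} {B : Matrix m n R} {C : Matrix n m R} {D : Matrix n n R}
    (hX : (fromBlocks A B C D)ᵀ * fromBlocks 1 0 0 (-1) * fromBlocks A B C D =
      fromBlocks 1 0 0 (-1)) :
    Bᵀ * A = Dᵀ * C ∧ Dᵀ * D - Bᵀ * B = 1 := by
  rw [fromBlocks_transpose, fromBlocks_multiply, fromBlocks_multiply] at hX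
  have h₂₁ := congrArg toBlocks₂₁ hX
  have h₂₂ := congrArg toBlocks₂₂ hX
  simp only [toBlocks_fromBlocks₂₁, toBlocks_fromBlocks₂₂, Matrix.mul_one, Matrix.mul_zero,
    add_zero, zero_add, Matrix.mul_neg, Matrix.neg_mul] at h₂₁ h₂₂
  constructor
  · rwa [add_neg_eq_zero] at h₂₁
  · rw [← neg_neg (1 : Matrix n n R), ← h₂₂]
    abel

theorem transpose_mul_schur_complement_eq_one [CommRing R]
    {A : Matrix m m R} {B : Matrix m n R} {C : Matrix n m R} {D : Matrix n n R}
    (hA : IsUnit A) (h₂₁ : Bᵀ * A = Dᵀ * C) (h₂₂ : Dᵀ * D - Bᵀ * B = 1) :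
    Dᵀ * (D - C * A⁻¹ * B) = 1 := by
  have hA' : IsUnit A.det := (isUnit_iff_isUnit_det A).mp hA
  calc Dᵀ * (D - C * A⁻¹ * B) = Dᵀ * D - Bᵀ * A * A⁻¹ * B := by
        rw [Matrix.mul_sub, h₂₁, Matrix.mul_assoc, Matrix.mul_assoc, Matrix.mul_assoc]
    _ = Dᵀ * D - Bᵀ * B := by rw [Matrix.mul_assoc Bᵀ, mul_nonsing_inv A hA', Matrix.mul_one]
    _ = 1 := h₂₂

theorem schur_complement_eq_inv_transpose_of_transpose_mul_indefinite_mul_self [CommRing R]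
    {A : Matrix m m R} {B : Matrix m n R} {C : Matrix n m R} {D : Matrix n n R}
    (hA : IsUnit A)
    (hX : (fromBlocks A B C D)ᵀ * fromBlocks 1 0 0 (-1) * fromBlocks A B C D =
      fromBlocks 1 0 0 (-1)) :
    D - C * A⁻¹ * B = (Dᵀ)⁻¹ :=
  have ⟨h₂₁, h₂₂⟩ := lower_blocks_of_transpose_mul_indefinite_mul_self hX
  (inv_eq_right_inv (transpose_mul_schur_complement_eq_one hA h₂₁ h₂₂)).symm

end Matrix

theorem stmt_2 {p q : ℕ}
    (A : Matrix (Fin p) (Fin p) ℝ) (B : Matrix (Fin p) (Fin q) ℝ)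
    (D : Matrix (Fin q) (Fin q) ℝ) (hA : A.PosDef) (hD : D.PosDef)
    (hX : (fromBlocks A B Bᵀ D)ᵀ * fromBlocks 1 0 0 (-1) * fromBlocks A B Bᵀ D =
      fromBlocks 1 0 0 (-1)) :
    D - Bᵀ * A⁻¹ * B = D⁻¹ := by
  have hDsymm : Dᵀ = D := hD.isHermitian
  rw [schur_complement_eq_inv_transpose_of_transpose_mul_indefinite_mul_self hA.isUnit hX,
    hDsymm]
end

section
/- Let B be any real n×n matrix. Let A be the unique positive definite square root of I + BBᵀ and D the unique positive definite square root of I + BᵀB. Then AB = BD, and consequently the block matrix X = [[A, B], [Bᵀ, D]] is positive definite and satisfies Xᵀ I_{n,n} X = I_{n,n}. -/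
/-!
If `A² = 1 + BBᴴ` and `D² = 1 + BᴴB`, then `C = AB - BD` satisfies the Sylvester equation
`AC + CD = A²B - BD² = 0`. For positive definite `A` and `D` this equation has only the trivial
solution: `tr (CᴴAC) + tr (CDCᴴ) = tr (Cᴴ(AC + CD)) = 0` forces both nonnegative traces to vanish.
Given `AB = BD`, the identity `XᴴJX = J` for `X = [[A, B], [Bᴴ, D]]` and `J = diag(1, -1)` is a
block computation, and it makes `X` invertible. The Schur complement of `A` in `X` is
`D - BᴴA⁻¹B = D - BᴴBD⁻¹ = D⁻¹ > 0`, so `X` is positive semidefinite, hence positive definite.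
-/

open Matrix

section CommRing

variable {R : Type*} [CommRing R] [StarRing R] {n m : Type*} [Fintype n] [Fintype m]
  [DecidableEq n] [DecidableEq m]

theorem Matrix.isUnit_of_conjTranspose_mul_mul_self_eq {J X : Matrix n n R} (hJ : IsUnit J)
    (h : Xᴴ * J * X = J) : IsUnit X := by
  refine isUnit_iff_isUnit_det _ |>.2 <| isUnit_det_of_left_inverse (B := J⁻¹ * Xᴴ * J) ?_
  rw [Matrix.mul_assoc, Matrix.mul_assoc, ← Matrix.mul_assoc Xᴴ, h,
    nonsing_inv_mul _ ((isUnit_iff_isUnit_det J).1 hJ)]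

theorem Matrix.fromBlocks_conjTranspose_mul_indefinite_mul_self {A : Matrix n n R}
    {B : Matrix n m R} {D : Matrix m m R} (hA : A.IsHermitian) (hD : D.IsHermitian)
    (hA2 : A * A = 1 + B * Bᴴ) (hD2 : D * D = 1 + Bᴴ * B) (hAB : A * B = B * D) :
    (fromBlocks A B Bᴴ D)ᴴ * fromBlocks 1 0 0 (-1) * fromBlocks A B Bᴴ D =
      fromBlocks 1 0 0 (-1) := by
  have hBA : Bᴴ * A = D * Bᴴ := by
    simpa only [conjTranspose_mul, hA.eq, hD.eq] using congrArg conjTranspose hAB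
  rw [fromBlocks_conjTranspose, hA.eq, hD.eq, conjTranspose_conjTranspose, fromBlocks_multiply,
    fromBlocks_multiply]
  simp only [Matrix.mul_one, Matrix.mul_zero, Matrix.mul_neg, Matrix.neg_mul, add_zero, zero_add,
    hA2, hD2, hAB, hBA]
  congr 1 <;> abel

theorem Matrix.sub_conjTranspose_mul_inv_mul_eq_inv {A : Matrix n n R} {B : Matrix n m R}
    {D : Matrix m m R} (hA : IsUnit A) (hD : IsUnit D) (hD2 : D * D = 1 + Bᴴ * B)
    (hAB : A * B = B * D) : D - Bᴴ * A⁻¹ * B = D⁻¹ := by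
  rw [isUnit_iff_isUnit_det] at hA hD
  have hAinvB : A⁻¹ * B = B * D⁻¹ :=
    calc A⁻¹ * B = A⁻¹ * (B * D * D⁻¹) := by rw [mul_nonsing_inv_cancel_right _ _ hD]
      _ = B * D⁻¹ := by rw [← hAB, Matrix.mul_assoc, nonsing_inv_mul_cancel_left _ _ hA]
  rw [Matrix.mul_assoc, hAinvB, ← Matrix.mul_assoc, eq_sub_of_add_eq' hD2.symm, Matrix.sub_mul,
    Matrix.mul_assoc, mul_nonsing_inv _ hD, Matrix.mul_one, Matrix.one_mul, sub_sub_cancel]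

end CommRing

section RCLike

open scoped ComplexOrder

variable {𝕜 : Type*} [RCLike 𝕜] {n m : Type*} [Fintype n] [Fintype m]

theorem Matrix.PosDef.conjTranspose_mul_mul_same_eq_zero_iff {A : Matrix n n 𝕜} (hA : A.PosDef)
    (X : Matrix n m 𝕜) : Xᴴ * A * X = 0 ↔ X = 0 := by
  classical
  refine ⟨fun h => ?_, fun h => by simp [h]⟩
  ext i j
  by_contra hij
  have hcol : X *ᵥ Pi.single j 1 ≠ 0 := fun h0 => hij (by simpa using congrFun h0 i)
  have := hA.dotProduct_mulVec_pos hcol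
  rw [star_mulVec, ← dotProduct_mulVec, mulVec_mulVec, mulVec_mulVec, h] at this
  simp at this

theorem Matrix.PosDef.eq_zero_of_mul_add_mul_eq_zero {A : Matrix n n 𝕜} {D : Matrix m m 𝕜}
    (hA : A.PosDef) (hD : D.PosDef) {X : Matrix n m 𝕜} (h : A * X + X * D = 0) : X = 0 := by
  have hXAX := hA.posSemidef.conjTranspose_mul_mul_same X
  have hXDX := hD.posSemidef.mul_mul_conjTranspose_same X
  have htrace : (Xᴴ * A * X).trace + (X * D * Xᴴ).trace = 0 := by
    rw [Matrix.mul_assoc, trace_mul_comm (X * D), ← trace_add, ← Matrix.mul_add, h,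
      Matrix.mul_zero, trace_zero]
  rw [← hA.conjTranspose_mul_mul_same_eq_zero_iff, ← hXAX.trace_eq_zero_iff]
  exact ((add_eq_zero_iff_of_nonneg hXAX.trace_nonneg hXDX.trace_nonneg).1 htrace).1

variable [DecidableEq n] [DecidableEq m]

theorem Matrix.PosDef.mul_eq_mul_of_mul_self_eq_one_add {A : Matrix n n 𝕜} {B : Matrix n m 𝕜}
    {D : Matrix m m 𝕜} (hA : A.PosDef) (hD : D.PosDef) (hA2 : A * A = 1 + B * Bᴴ)
    (hD2 : D * D = 1 + Bᴴ * B) : A * B = B * D := by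
  refine sub_eq_zero.1 <| eq_zero_of_mul_add_mul_eq_zero hA hD ?_
  calc A * (A * B - B * D) + (A * B - B * D) * D = A * A * B - B * (D * D) := by
        simp only [Matrix.mul_sub, Matrix.sub_mul, Matrix.mul_assoc, sub_add_sub_cancel]
    _ = 0 := by
        rw [hA2, hD2, Matrix.add_mul, Matrix.mul_add, Matrix.one_mul, Matrix.mul_one,
          Matrix.mul_assoc, sub_self]

theorem Matrix.PosDef.posSemidef_fromBlocks {A : Matrix n n 𝕜} {B : Matrix n m 𝕜}
    {D : Matrix m m 𝕜} (hA : A.PosDef) (hD : D.PosDef) (hD2 : D * D = 1 + Bᴴ * B)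
    (hAB : A * B = B * D) : (fromBlocks A B Bᴴ D).PosSemidef := by
  have := hA.isUnit.invertible
  rw [PosDef.fromBlocks₁₁ B D hA,
    sub_conjTranspose_mul_inv_mul_eq_inv hA.isUnit hD.isUnit hD2 hAB]
  exact hD.inv.posSemidef

end RCLike

theorem stmt_7 {n : ℕ} (A B D : Matrix (Fin n) (Fin n) ℝ)
    (hA : A.PosDef) (hA2 : A * A = 1 + B * Bᵀ)
    (hD : D.PosDef) (hD2 : D * D = 1 + Bᵀ * B) :
    A * B = B * D ∧ (fromBlocks A B Bᵀ D).PosDef ∧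
      (fromBlocks A B Bᵀ D)ᵀ * fromBlocks 1 0 0 (-1) * fromBlocks A B Bᵀ D =
        fromBlocks 1 0 0 (-1) := by
  simp only [← conjTranspose_eq_transpose_of_trivial] at hA2 hD2 ⊢
  have hAB := hA.mul_eq_mul_of_mul_self_eq_one_add hD hA2 hD2
  have hJ := fromBlocks_conjTranspose_mul_indefinite_mul_self hA.isHermitian hD.isHermitian
    hA2 hD2 hAB
  have hJJ : (fromBlocks 1 0 0 (-1) : Matrix (Fin n ⊕ Fin n) (Fin n ⊕ Fin n) ℝ) *
      fromBlocks 1 0 0 (-1) = 1 := by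
    simp [fromBlocks_multiply]
  have hJunit := isUnit_iff_exists.2 ⟨_, hJJ, hJJ⟩
  exact ⟨hAB, (hA.posSemidef_fromBlocks hD hD2 hAB).posDef_iff_isUnit.2
    (isUnit_of_conjTranspose_mul_mul_self_eq hJunit hJ), hJ⟩
end

section
/- Let A be a real n×n positive definite matrix with A² - I positive semidefinite. Let Bᵀ be any real n×n matrix with BBᵀ = A² - I, and let D be the unique positive definite square root of I + BᵀB. Then AB = BD, and the block matrix X = [[A, B], [Bᵀ, D]] is positive definite and satisfies Xᵀ I_{n,n} X = I_{n,n}. -/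
/-!
With `A² = 1 + BBᴴ` and `D² = 1 + BᴴB` one has `A²B = BD²`, so `E = AB - BD` solves the
Sylvester equation `AE + ED = 0`. Multiplying by `Eᴴ` and taking traces gives
`tr(EᴴAE) + tr(EDEᴴ) = 0`, a sum of traces of positive semidefinite matrices, hence `E = 0`.
Once `AB = BD`, the identity `Mᴴ J M = J` for the block matrix `M` and `J = I_{n,n}` is a
blockwise computation, and it makes `M` invertible. The Schur complement
`D - BᴴA⁻¹B = D - BᴴBD⁻¹ = D⁻¹` is positive definite, so `M` is positive semidefinite and
invertible, hence positive definite.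
-/

open Matrix
open scoped ComplexOrder

namespace Matrix

section CommRing

variable {R m n : Type*} [CommRing R] [StarRing R] [Fintype m] [Fintype n]

theorem PosDef.conjTranspose_mul_mul_same_eq_zero_iff_s8 [PartialOrder R] {A : Matrix m m R}
    (hA : A.PosDef) {X : Matrix m n R} : Xᴴ * A * X = 0 ↔ X = 0 := by
  classical
  refine ⟨fun h => ext_of_mulVec_single fun j => ?_, fun h => by simp [h]⟩
  by_contra hX
  rw [zero_mulVec] at hX
  have := hA.dotProduct_mulVec_pos hX
  rw [star_mulVec, ← dotProduct_mulVec, mulVec_mulVec, mulVec_mulVec, h] at this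
  simp at this

theorem isUnit_of_conjTranspose_mul_mul_self_eq_s8 [DecidableEq n] {J X : Matrix n n R}
    (hJ : IsUnit J) (h : Xᴴ * J * X = J) : IsUnit X := by
  rw [isUnit_iff_isUnit_det] at hJ ⊢
  rw [← h, det_mul] at hJ
  exact isUnit_of_mul_isUnit_right hJ

theorem fromBlocks_conjTranspose_mul_indefinite_mul_self_s8 [DecidableEq m] [DecidableEq n]
    {A : Matrix m m R} {B : Matrix m n R} {D : Matrix n n R} (hA : A.IsHermitian)
    (hD : D.IsHermitian) (hAB : A * B = B * D) (hB : B * Bᴴ = A * A - 1)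
    (hD2 : D * D = 1 + Bᴴ * B) :
    (fromBlocks A B Bᴴ D)ᴴ * fromBlocks 1 0 0 (-1) * fromBlocks A B Bᴴ D =
      fromBlocks 1 0 0 (-1) := by
  have hBA : Bᴴ * A = D * Bᴴ := by
    simpa only [conjTranspose_mul, hA.eq, hD.eq] using congrArg conjTranspose hAB
  rw [fromBlocks_conjTranspose, conjTranspose_conjTranspose, hA.eq, hD.eq, fromBlocks_multiply,
    fromBlocks_multiply]
  simp only [Matrix.mul_one, Matrix.mul_zero, Matrix.mul_neg, Matrix.neg_mul, add_zero, zero_add,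
    hAB, hBA, hB, hD2]
  congr 1 <;> abel

end CommRing

theorem PosDef.sub_conjTranspose_mul_inv_mul_eq_inv {K m n : Type*} [Field K] [PartialOrder K]
    [StarRing K] [Fintype m] [Fintype n] [DecidableEq m] [DecidableEq n] {A : Matrix m m K}
    {B : Matrix m n K} {D : Matrix n n K} (hA : A.PosDef) (hD : D.PosDef) (hAB : A * B = B * D)
    (hD2 : D * D = 1 + Bᴴ * B) :
    D - Bᴴ * A⁻¹ * B = D⁻¹ := by
  have := hA.isUnit.invertible
  have := hD.isUnit.invertible
  have hAB' : A⁻¹ * B = B * D⁻¹ := by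
    rw [inv_mul_eq_iff_eq_mul_of_invertible, ← Matrix.mul_assoc, hAB, Matrix.mul_assoc,
      mul_inv_of_invertible, Matrix.mul_one]
  rw [Matrix.mul_assoc, hAB', ← Matrix.mul_assoc, eq_sub_of_add_eq' hD2.symm, Matrix.sub_mul,
    Matrix.mul_assoc, mul_inv_of_invertible, Matrix.mul_one, Matrix.one_mul, sub_sub_cancel]

section RCLike

variable {𝕜 m n : Type*} [RCLike 𝕜] [Fintype m] [Fintype n] {A : Matrix m m 𝕜}
  {D : Matrix n n 𝕜}

theorem PosDef.eq_zero_of_mul_add_mul_eq_zero_s8 (hA : A.PosDef) (hD : D.PosDef)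
    {X : Matrix m n 𝕜} (h : A * X + X * D = 0) : X = 0 := by
  have htrace : (Xᴴ * A * X).trace + (X * D * Xᴴ).trace = 0 := by
    rw [trace_mul_comm (X * D), ← trace_add, Matrix.mul_assoc, ← Matrix.mul_add, h,
      Matrix.mul_zero, trace_zero]
  have hAX := hA.posSemidef.conjTranspose_mul_mul_same X
  have hDX := hD.posSemidef.mul_mul_conjTranspose_same X
  have hAX0 := ((add_eq_zero_iff_of_nonneg hAX.trace_nonneg hDX.trace_nonneg).1 htrace).1
  exact hA.conjTranspose_mul_mul_same_eq_zero_iff_s8.1 (hAX.trace_eq_zero_iff.1 hAX0)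

theorem PosDef.mul_eq_mul_of_mul_self_mul_eq (hA : A.PosDef) (hD : D.PosDef)
    {B : Matrix m n 𝕜} (h : A * A * B = B * (D * D)) : A * B = B * D := by
  refine sub_eq_zero.1 (hA.eq_zero_of_mul_add_mul_eq_zero_s8 hD ?_)
  calc A * (A * B - B * D) + (A * B - B * D) * D = A * A * B - B * (D * D) := by
        simp only [Matrix.mul_sub, Matrix.sub_mul, Matrix.mul_assoc]; abel
    _ = 0 := by rw [h, sub_self]

end RCLike

end Matrix

theorem stmt_8_general {n : ℕ} (A B D : Matrix (Fin n) (Fin n) ℝ)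
    (hA : A.PosDef)
    (hB : B * Bᵀ = A * A - 1)
    (hD : D.PosDef) (hD2 : D * D = 1 + Bᵀ * B) :
    A * B = B * D ∧ (fromBlocks A B Bᵀ D).PosDef ∧
      (fromBlocks A B Bᵀ D)ᵀ * fromBlocks 1 0 0 (-1) * fromBlocks A B Bᵀ D =
        fromBlocks 1 0 0 (-1) := by
  simp only [← conjTranspose_eq_transpose_of_trivial] at hB hD2 ⊢
  have hAB : A * B = B * D := hA.mul_eq_mul_of_mul_self_mul_eq hD <|
    calc A * A * B = (1 + B * Bᴴ) * B := by rw [hB, add_sub_cancel]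
      _ = B * (1 + Bᴴ * B) := by
        simp only [Matrix.add_mul, Matrix.mul_add, Matrix.one_mul, Matrix.mul_one,
          Matrix.mul_assoc]
      _ = B * (D * D) := by rw [hD2]
  have hJ := fromBlocks_conjTranspose_mul_indefinite_mul_self_s8 hA.isHermitian hD.isHermitian hAB
    hB hD2
  have hJ_unit : IsUnit (fromBlocks 1 0 0 (-1) : Matrix (Fin n ⊕ Fin n) (Fin n ⊕ Fin n) ℝ) :=
    .of_mul_eq_one (fromBlocks 1 0 0 (-1)) (by simp [fromBlocks_multiply])
  have := hA.isUnit.invertible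
  have hM : (fromBlocks A B Bᴴ D).PosSemidef := by
    rw [PosDef.fromBlocks₁₁ B D hA, hA.sub_conjTranspose_mul_inv_mul_eq_inv hD hAB hD2]
    exact hD.inv.posSemidef
  exact ⟨hAB, hM.posDef_iff_isUnit.2 (isUnit_of_conjTranspose_mul_mul_self_eq_s8 hJ_unit hJ), hJ⟩

theorem stmt_8 {n : ℕ} (A B D : Matrix (Fin n) (Fin n) ℝ)
    (hA : A.PosDef) (hA2 : (A * A - 1).PosSemidef)
    (hB : B * Bᵀ = A * A - 1)
    (hD : D.PosDef) (hD2 : D * D = 1 + Bᵀ * B) :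
    A * B = B * D ∧ (fromBlocks A B Bᵀ D).PosDef ∧
      (fromBlocks A B Bᵀ D)ᵀ * fromBlocks 1 0 0 (-1) * fromBlocks A B Bᵀ D =
        fromBlocks 1 0 0 (-1) :=
  stmt_8_general A B D hA hB hD hD2
end

section
/- Every positive definite matrix P in G_{I_{n,n}} = {X : Xᵀ I_{n,n} X = I_{n,n}} is the matrix exponential of a real symmetric matrix of the form [[0, X], [Xᵀ, 0]]. In particular, P lies in the connected component of the identity of G_{I_{n,n}}. -/
/-!
A positive definite `P` has a unique symmetric logarithm `S`. If `P` preserves the form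
`J = diag(1, -1)`, then `J P J = P⁻¹`, so `-(J S J)` is also a symmetric logarithm of `P`; hence
`S` anticommutes with `J`, which for a symmetric matrix means `S = [[0, X], [Xᵀ, 0]]`.
Anticommuting with `J` is the Lie algebra condition, so the whole path `t ↦ exp (t S)` stays in
the group and joins `1` to `P`.
-/

open Matrix NormedSpace

namespace Matrix

instance {l m R : Type*} [AddMonoid R] [IsAddTorsionFree R] : IsAddTorsionFree (Matrix l m R) :=
  inferInstanceAs (IsAddTorsionFree (l → m → R))

lemma eq_fromBlocks_zero_zero_of_mul_eq_neg_mul {l m R : Type*} [Fintype l] [Fintype m]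
    [DecidableEq l] [DecidableEq m] [Ring R] [IsAddTorsionFree R] {S : Matrix (l ⊕ m) (l ⊕ m) R}
    (hS : Sᵀ = S)
    (hanti : S * fromBlocks (1 : Matrix l l R) 0 0 (-1) = -(fromBlocks 1 0 0 (-1) * S)) :
    S = fromBlocks 0 S.toBlocks₁₂ S.toBlocks₁₂ᵀ 0 := by
  rw [← fromBlocks_toBlocks S] at hS hanti
  simp only [fromBlocks_multiply, fromBlocks_transpose, fromBlocks_neg, fromBlocks_inj,
    Matrix.mul_one, Matrix.one_mul, Matrix.mul_zero, Matrix.zero_mul, add_zero, zero_add,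
    Matrix.mul_neg, Matrix.neg_mul, neg_neg, true_and] at hS hanti
  obtain ⟨-, -, h₂₁, -⟩ := hS
  obtain ⟨h₁₁, h₂₂⟩ := hanti
  conv_lhs => rw [← fromBlocks_toBlocks S]
  rw [self_eq_neg.mp h₁₁, neg_eq_self.mp h₂₂, h₂₁]

lemma isSelfAdjoint_iff_transpose_eq {m : Type*} {S : Matrix m m ℝ} :
    IsSelfAdjoint S ↔ Sᵀ = S := by
  rw [_root_.IsSelfAdjoint, star_eq_conjTranspose, conjTranspose_eq_transpose_of_trivial]

variable {m : Type*} [Fintype m] [DecidableEq m]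

open scoped Matrix.Norms.L2Operator in
lemma continuous_exp_smul (S : Matrix m m ℝ) : Continuous fun t : ℝ => exp (t • S) := by
  let := NormedAlgebra.restrictScalars ℚ ℝ (Matrix m m ℝ)
  fun_prop

lemma exp_mem_connectedComponentIn_one {s : Set (Matrix m m ℝ)} (S : Matrix m m ℝ)
    (hs : ∀ t : ℝ, exp (t • S) ∈ s) : exp S ∈ connectedComponentIn s 1 :=
  (isPreconnected_range (continuous_exp_smul S)).subset_connectedComponentIn ⟨0, by simp⟩
    (Set.range_subset_iff.2 hs) ⟨1, by simp⟩

open scoped Matrix.Norms.L2Operator in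
lemma exp_transpose_mul_mul_exp {S J : Matrix m m ℝ} (h : Sᵀ * J = -(J * S)) :
    (exp S)ᵀ * J * exp S = J := by
  let := NormedAlgebra.restrictScalars ℚ ℝ (Matrix m m ℝ)
  have hsemi : SemiconjBy J S (-Sᵀ) := by
    rw [SemiconjBy, neg_mul, h, neg_neg]
  simpa only [neg_neg, exp_transpose] using hsemi.exp_neg_mul_mul_exp_eq_self

open scoped Matrix.Norms.L2Operator MatrixOrder in
lemma PosDef.exists_transpose_eq_and_exp_eq {P : Matrix m m ℝ} (hP : P.PosDef) :
    ∃ S : Matrix m m ℝ, Sᵀ = S ∧ exp S = P :=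
  ⟨CFC.log P, isSelfAdjoint_iff_transpose_eq.1 (cfc_predicate _ _),
    CFC.exp_log P hP.isStrictlyPositive⟩

open scoped Matrix.Norms.L2Operator MatrixOrder in
lemma exp_injOn_transpose_eq : Set.InjOn exp {S : Matrix m m ℝ | Sᵀ = S} := fun S hS T hT h => by
  rw [← CFC.log_exp S (isSelfAdjoint_iff_transpose_eq.2 hS),
    ← CFC.log_exp T (isSelfAdjoint_iff_transpose_eq.2 hT), h]

lemma mul_eq_neg_mul_of_exp_transpose_mul_mul_exp {S J : Matrix m m ℝ} (hS : Sᵀ = S)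
    (hJ : J * J = 1) (hJt : Jᵀ = J) (h : (exp S)ᵀ * J * exp S = J) : S * J = -(J * S) := by
  have hinv : (J * exp S * J)⁻¹ = exp S := inv_eq_left_inv <| by
    rw [← exp_transpose, hS] at h
    rw [← mul_assoc, ← mul_assoc, h, hJ]
  have hconj : exp (J * S * J) = J * exp S * J := by
    simpa only [inv_eq_right_inv hJ] using exp_conj J S (IsUnit.of_mul_eq_one_right J hJ)
  have hneg : -(J * S * J) = S := exp_injOn_transpose_eq
    (by rw [Set.mem_ofPred_eq, transpose_neg, transpose_mul, transpose_mul, hJt, hS, mul_assoc]) hS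
    (by rw [exp_neg, hconj, hinv])
  calc S * J = -(J * S * J) * J := by rw [hneg]
    _ = -(J * S) := by rw [neg_mul, mul_assoc, hJ, mul_one]

end Matrix

theorem stmt_10 {n : ℕ} (P : Matrix (Fin n ⊕ Fin n) (Fin n ⊕ Fin n) ℝ)
    (hP : P.PosDef)
    (hG : Pᵀ * fromBlocks 1 0 0 (-1) * P = fromBlocks 1 0 0 (-1)) :
    (∃ X : Matrix (Fin n) (Fin n) ℝ,
        P = NormedSpace.exp (fromBlocks 0 X Xᵀ 0)) ∧
    P ∈ connectedComponentIn
        {Y : Matrix (Fin n ⊕ Fin n) (Fin n ⊕ Fin n) ℝ |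
          Yᵀ * fromBlocks 1 0 0 (-1) * Y = fromBlocks 1 0 0 (-1)} 1 := by
  set J : Matrix (Fin n ⊕ Fin n) (Fin n ⊕ Fin n) ℝ := fromBlocks 1 0 0 (-1)
  have hJJ : J * J = 1 := by simp [J, fromBlocks_multiply, ← fromBlocks_one]
  have hJt : Jᵀ = J := by simp [J, fromBlocks_transpose]
  obtain ⟨S, hSt, rfl⟩ := hP.exists_transpose_eq_and_exp_eq
  have hanti : S * J = -(J * S) := mul_eq_neg_mul_of_exp_transpose_mul_mul_exp hSt hJJ hJt hG
  refine ⟨⟨S.toBlocks₁₂, congrArg exp (eq_fromBlocks_zero_zero_of_mul_eq_neg_mul hSt hanti)⟩,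
    exp_mem_connectedComponentIn_one S fun t => exp_transpose_mul_mul_exp ?_⟩
  rw [transpose_smul, hSt, smul_mul_assoc, hanti, mul_smul_comm, smul_neg]
end

section
/- Let G ∈ SL(2,ℂ) be Hermitian positive definite. Then Φ(G), the image under the covering map SL(2,ℂ) → SO⁺(1,3,ℝ), is a real symmetric positive definite 4×4 matrix. -/
/-!
Put `X = ∑ᵢ xᵢ σᵢ`. The quadratic form of `Φ(G)` is `xᵀ Φ(G) x = ½ Re tr(X G X G)`. Factoring
`G = Bᴴ B`, this equals `½ tr(Yᴴ Y)` with `Y = B X Bᴴ`, which is positive once `X ≠ 0` because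
`G` is invertible. Symmetry of `Φ(G)` is cyclicity of the trace, using `Gᴴ = G`.
-/

open Matrix Complex

/-- The basis `{I₂, σ_x, σ_y, σ_z}` of the real space of 2×2 Hermitian matrices. -/
noncomputable def pauli : Fin 4 → Matrix (Fin 2) (Fin 2) ℂ :=
  ![1, !![0, 1; 1, 0], !![0, -Complex.I; Complex.I, 0], !![1, 0; 0, -1]]

/-- The covering map `SL(2,ℂ) → SO⁺(1,3,ℝ)`: `Φ(G)` is the matrix of
`X ↦ G X G*` on Hermitian 2×2 matrices w.r.t. the basis `{I₂, σ_x, σ_y, σ_z}`,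
whose entries are extracted using the trace inner product. -/
noncomputable def Phi (G : Matrix (Fin 2) (Fin 2) ℂ) : Matrix (Fin 4) (Fin 4) ℝ :=
  Matrix.of fun i j => ((pauli i * (G * pauli j * Gᴴ)).trace.re) / 2

open scoped ComplexOrder

namespace Matrix

variable {n : Type*} [Fintype n] {𝕜 : Type*} [RCLike 𝕜]

open scoped MatrixOrder in
theorem PosSemidef.exists_eq_conjTranspose_mul_self [DecidableEq n] {A : Matrix n n 𝕜}
    (hA : A.PosSemidef) : ∃ B : Matrix n n 𝕜, A = Bᴴ * B :=
  CStarAlgebra.nonneg_iff_eq_star_mul_self.mp hA.nonneg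

theorem PosDef.of_re_dotProduct_mulVec_pos {A : Matrix n n ℂ} (hA : A.IsHermitian)
    (hpos : ∀ x : n → ℂ, x ≠ 0 → 0 < (star x ⬝ᵥ A *ᵥ x).re) : A.PosDef :=
  .of_dotProduct_mulVec_pos hA fun x hx ↦ Complex.lt_def.mpr
    ⟨by simpa using hpos x hx, by simpa using (hA.im_star_dotProduct_mulVec_self x).symm⟩

theorem PosDef.re_trace_mul_mul_mul_pos [DecidableEq n] {G X : Matrix n n 𝕜} (hG : G.PosDef)
    (hX : X.IsHermitian) (hX0 : X ≠ 0) : 0 < RCLike.re (X * G * X * G).trace := by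
  obtain ⟨B, rfl⟩ := hG.posSemidef.exists_eq_conjTranspose_mul_self
  set Y := B * X * Bᴴ
  have hYY : (X * (Bᴴ * B) * X * (Bᴴ * B)).trace = (Yᴴ * Y).trace := by
    rw [show Yᴴ = Y by simp [Y, hX.eq, mul_assoc]]
    simp only [Y, ← mul_assoc]
    rw [trace_mul_comm]
    simp only [mul_assoc]
  have hY0 : Y ≠ 0 := fun hY ↦ hX0 <| by
    have : Bᴴ * B * X * (Bᴴ * B) = Bᴴ * Y * B := by simp only [Y, mul_assoc]
    rwa [hY, mul_zero, zero_mul, hG.isUnit.mul_left_eq_zero, hG.isUnit.mul_right_eq_zero] at this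
  rw [hYY]
  exact RCLike.pos_iff.mp ((posSemidef_conjTranspose_mul_self Y).trace_nonneg.lt_of_ne'
    (mt trace_conjTranspose_mul_self_eq_zero_iff.mp hY0)) |>.1

end Matrix

noncomputable def pauliSum (x : Fin 4 → ℝ) : Matrix (Fin 2) (Fin 2) ℂ :=
  ∑ i, (x i : ℂ) • pauli i

theorem pauliSum_eq (x : Fin 4 → ℝ) :
    pauliSum x = !![(x 0 + x 3 : ℂ), x 1 - x 2 * I; x 1 + x 2 * I, x 0 - x 3] := by
  ext i j
  fin_cases i <;> fin_cases j <;> simp [pauliSum, pauli, Fin.sum_univ_four, sub_eq_add_neg]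

theorem isHermitian_pauliSum (x : Fin 4 → ℝ) : (pauliSum x).IsHermitian := by
  rw [pauliSum_eq]
  ext i j
  fin_cases i <;> fin_cases j <;> simp [Complex.ext_iff]

theorem pauliSum_eq_zero_iff {x : Fin 4 → ℝ} : pauliSum x = 0 ↔ x = 0 := by
  refine ⟨fun h ↦ ?_, fun h ↦ by simp [h, pauliSum]⟩
  rw [pauliSum_eq] at h
  have h00 := congrFun₂ h 0 0
  have h11 := congrFun₂ h 1 1
  have h10 := congrFun₂ h 1 0
  simp only [Fin.isValue, of_apply, cons_val', cons_val_zero, cons_val_one, cons_val_fin_one,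
    Matrix.zero_apply, Complex.ext_iff, add_re, add_im, sub_re, sub_im, mul_re, mul_im, ofReal_re,
    ofReal_im, I_re, I_im, zero_re, zero_im] at h00 h11 h10
  ext i
  fin_cases i <;> simp only [Fin.zero_eta, Fin.mk_one, Fin.reduceFinMk, Pi.zero_apply] <;> linarith

theorem dotProduct_Phi_mulVec (G : Matrix (Fin 2) (Fin 2) ℂ) (x : Fin 4 → ℝ) :
    x ⬝ᵥ Phi G *ᵥ x = (pauliSum x * G * pauliSum x * Gᴴ).trace.re / 2 := by
  simp only [dotProduct, mulVec, Phi, of_apply, pauliSum, Finset.sum_mul, Finset.mul_sum,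
    trace_sum, smul_mul, mul_smul_comm, trace_smul, re_sum, Finset.sum_div, smul_eq_mul,
    re_ofReal_mul]
  rw [Finset.sum_comm]
  refine Finset.sum_congr rfl fun i _ ↦ Finset.sum_congr rfl fun j _ ↦ ?_
  simp only [mul_assoc]
  ring

theorem Phi_isSymm {G : Matrix (Fin 2) (Fin 2) ℂ} (hG : G.IsHermitian) : (Phi G).IsSymm := by
  ext i j
  have := trace_mul_comm (pauli j * G) (pauli i * G)
  simp only [transpose_apply, Phi, of_apply, hG.eq, mul_assoc] at this ⊢
  rw [this]

theorem stmt_15_general (G : Matrix (Fin 2) (Fin 2) ℂ)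
    (hHerm : G.IsHermitian)
    (hPos : ∀ x : Fin 2 → ℂ, x ≠ 0 → 0 < (star x ⬝ᵥ G.mulVec x).re) :
    (Phi G).IsSymm ∧ (Phi G).PosDef := by
  have hG : G.PosDef := .of_re_dotProduct_mulVec_pos hHerm hPos
  have hPhi : (Phi G).IsSymm := Phi_isSymm hHerm
  refine ⟨hPhi, .of_dotProduct_mulVec_pos (isHermitian_iff_isSymm.mpr hPhi) fun x hx ↦ ?_⟩
  have hX : pauliSum x ≠ 0 := mt pauliSum_eq_zero_iff.mp hx
  have hpos := hG.re_trace_mul_mul_mul_pos (isHermitian_pauliSum x) hX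
  rw [star_trivial, dotProduct_Phi_mulVec, hHerm.eq]
  exact half_pos hpos

theorem stmt_15 (G : Matrix (Fin 2) (Fin 2) ℂ)
    (hHerm : G.IsHermitian)
    (hPos : ∀ x : Fin 2 → ℂ, x ≠ 0 → 0 < (star x ⬝ᵥ G.mulVec x).re)
    (hdet : G.det = 1) :
    (Phi G).IsSymm ∧ (Phi G).PosDef :=
  stmt_15_general G hHerm hPos
end

section
/- Let A and B be positive definite matrices in SL(2,ℝ) and let Φ(A,B) ∈ SO⁺(2,2,ℝ) be the image under the covering map SL(2,ℝ)×SL(2,ℝ) → SO⁺(2,2,ℝ) given by conjugation X ↦ CXC⁻¹ of the concentric embedding C of (A,B) acting on the 4-dimensional space spanned by {σ_z⊗σ_x, σ_x⊗I₂, σ_z⊗iσ_y, iσ_y⊗I₂}. Then Φ(A,B) is positive definite. -/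
open Matrix

/-- The real basis `{σ_z⊗σ_x, σ_x⊗I₂, σ_z⊗iσ_y, iσ_y⊗I₂}` of the 4-dimensional
space on which the concentric embedding acts by conjugation. -/
def EBasis : Fin 4 → Matrix (Fin 4) (Fin 4) ℝ :=
  ![!![0,1,0,0; 1,0,0,0; 0,0,0,-1; 0,0,-1,0],
    !![0,0,1,0; 0,0,0,1; 1,0,0,0; 0,1,0,0],
    !![0,1,0,0; -1,0,0,0; 0,0,0,-1; 0,0,1,0],
    !![0,0,1,0; 0,0,0,1; -1,0,0,0; 0,-1,0,0]]

/-- The concentric embedding of a pair `(A, B)` of 2×2 matrices into `M(4,ℝ)`. -/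
def concentric (A B : Matrix (Fin 2) (Fin 2) ℝ) : Matrix (Fin 4) (Fin 4) ℝ :=
  !![A 0 0, 0, 0, A 0 1;
     0, B 0 0, B 0 1, 0;
     0, B 1 0, B 1 1, 0;
     A 1 0, 0, 0, A 1 1]

/-- The covering map `SL(2,ℝ) × SL(2,ℝ) → SO⁺(2,2,ℝ)`: the matrix of
`X ↦ C X C⁻¹` (where `C` is the concentric embedding of `(A, B)`) with respect
to the basis `EBasis`, with coefficients extracted via the trace form. -/
noncomputable def Phi22 (A B : Matrix (Fin 2) (Fin 2) ℝ) : Matrix (Fin 4) (Fin 4) ℝ :=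
  Matrix.of fun i j =>
    ((EBasis i)ᵀ * (concentric A B * EBasis j * (concentric A B)⁻¹)).trace / 4

/-!
The covering map is the tensor-product representation in disguise: in suitable
coordinates `M` (with `MᵀM = 2`), `Φ(A,B) = ½ Mᵀ (A ⊗ B) M`. A Kronecker product
of positive definite matrices is positive definite, and so is its congruence by
the injective `M`.
-/

open scoped Kronecker

lemma concentric_mul (A B A' B' : Matrix (Fin 2) (Fin 2) ℝ) :
    concentric A B * concentric A' B' = concentric (A * A') (B * B') := by
  ext i j
  fin_cases i <;> fin_cases j <;> simp [concentric, mul_apply, Fin.sum_univ_four, Fin.sum_univ_two]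

lemma inv_concentric_of_det_eq_one {A B : Matrix (Fin 2) (Fin 2) ℝ} (hA : A.det = 1)
    (hB : B.det = 1) : (concentric A B)⁻¹ = concentric A.adjugate B.adjugate := by
  refine inv_eq_right_inv ?_
  rw [concentric_mul, mul_adjugate, mul_adjugate, hA, hB, one_smul]
  ext i j
  fin_cases i <;> fin_cases j <;> simp [concentric]

/-- Coordinates of the span of `EBasis` in the tensor basis `eᵢ ⊗ eₖ` of `ℝ² ⊗ ℝ²`. -/
def tensorCoords : Matrix (Fin 2 × Fin 2) (Fin 4) ℝ :=
  Matrix.of fun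
    | (0, 0) => ![0, -1, 0, -1]
    | (0, 1) => ![1, 0, 1, 0]
    | (1, 0) => ![1, 0, -1, 0]
    | (1, 1) => ![0, 1, 0, -1]

lemma transpose_tensorCoords_mul_self : tensorCoordsᵀ * tensorCoords = (2 : ℝ) • 1 := by
  ext i j
  fin_cases i <;> fin_cases j <;> norm_num [tensorCoords, mul_apply, Fintype.sum_prod_type]

lemma injective_mulVec_tensorCoords : Function.Injective tensorCoords.mulVec := by
  refine Function.LeftInverse.injective (g := ((1 / 2 : ℝ) • tensorCoordsᵀ).mulVec) fun x => ?_
  rw [mulVec_mulVec, Matrix.smul_mul, transpose_tensorCoords_mul_self, smul_smul]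
  norm_num

lemma Phi22_eq_kronecker {A B : Matrix (Fin 2) (Fin 2) ℝ} (hA : A.det = 1) (hB : B.det = 1) :
    Phi22 A B = (1 / 2 : ℝ) • (tensorCoordsᴴ * (A ⊗ₖ B) * tensorCoords) := by
  ext i j
  rw [Phi22, of_apply, inv_concentric_of_det_eq_one hA hB, adjugate_fin_two, adjugate_fin_two]
  -- With `C⁻¹` written through adjugates, every entry is a polynomial identity bilinear in `A, B`.
  fin_cases i <;> fin_cases j <;>
    simp [EBasis, concentric, tensorCoords, trace, mul_apply, Fin.sum_univ_four, Fin.sum_univ_two,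
      Fintype.sum_prod_type] <;> ring

theorem stmt_17 (A B : Matrix (Fin 2) (Fin 2) ℝ)
    (hA : A.PosDef) (hB : B.PosDef)
    (hdA : A.det = 1) (hdB : B.det = 1) :
    (Phi22 A B).PosDef := by
  rw [Phi22_eq_kronecker hdA hdB]
  exact ((hA.kronecker hB).conjTranspose_mul_mul_same injective_mulVec_tensorCoords).smul
    (by norm_num)
end

section
/- Let X ∈ G_{I_{n,n}} = {X : Xᵀ I_{n,n} X = I_{n,n}} with diagonal n×n blocks A (upper left) and D (lower right). If X lies in the connected component of the identity SO⁺(n,n,ℝ), then det(X) = 1, det(A) > 0 and det(D) > 0. -/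
/-!
If `Yᵀ I_{m,n} Y = I_{m,n}` with blocks `A B / C D`, then `AᵀA = 1 + CᵀC` and `DᵀD = 1 + BᵀB` are
positive definite, so `det A` and `det D` never vanish on the group, and `det Y = ±1`. A continuous
real function that vanishes nowhere on a set keeps its sign on each connected component, and all
three determinants equal `1` at the identity; finally `det Y > 0` and `det Y ^ 2 = 1` give `det Y = 1`.
-/

open Matrix

section Topology

variable {α : Type*} [TopologicalSpace α] {s : Set α} {f : α → ℝ} {x₀ x : α}

theorem pos_of_mem_connectedComponentIn (hf : ContinuousOn f s) (hs : ∀ y ∈ s, f y ≠ 0)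
    (hx₀ : 0 < f x₀) (hx : x ∈ connectedComponentIn s x₀) : 0 < f x := by
  have hx₀s : x₀ ∈ s := connectedComponentIn_nonempty_iff.mp ⟨x, hx⟩
  by_contra! hfx
  obtain ⟨y, hy, hfy⟩ := isPreconnected_connectedComponentIn.intermediate_value hx
    (mem_connectedComponentIn hx₀s) (hf.mono (connectedComponentIn_subset s x₀))
    ⟨hfx, hx₀.le⟩
  exact hs y (connectedComponentIn_subset s x₀ hy) hfy

end Topology

theorem det_sq_eq_one_of_transpose_mul_mul_self {R m : Type*} [CommRing R] [IsDomain R]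
    [Fintype m] [DecidableEq m] {J Y : Matrix m m R} (hJ : J.det ≠ 0) (hY : Yᵀ * J * Y = J) :
    Y.det ^ 2 = 1 := by
  have h := congrArg det hY
  rw [det_mul, det_mul, det_transpose] at h
  exact mul_left_cancel₀ hJ (by linear_combination h)

theorem det_ne_zero_of_transpose_mul_self_eq_one_add {m k : Type*} [Fintype m] [DecidableEq m]
    [Fintype k] {M : Matrix m m ℝ} {N : Matrix k m ℝ} (h : Mᵀ * M = 1 + Nᵀ * N) :
    M.det ≠ 0 := by
  have hpos : (Mᵀ * M).PosDef := by
    rw [h, ← conjTranspose_eq_transpose_of_trivial]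
    exact PosDef.one.add_posSemidef (posSemidef_conjTranspose_mul_self N)
  have := hpos.det_pos
  rw [det_mul, det_transpose] at this
  exact left_ne_zero_of_mul this.ne'

theorem continuous_det_toBlocks₁₁ {m n : Type*} [Fintype m] [DecidableEq m] :
    Continuous fun Y : Matrix (m ⊕ n) (m ⊕ n) ℝ => Y.toBlocks₁₁.det :=
  (continuous_id.matrix_submatrix Sum.inl Sum.inl).matrix_det

theorem continuous_det_toBlocks₂₂ {m n : Type*} [Fintype n] [DecidableEq n] :
    Continuous fun Y : Matrix (m ⊕ n) (m ⊕ n) ℝ => Y.toBlocks₂₂.det :=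
  (continuous_id.matrix_submatrix Sum.inr Sum.inr).matrix_det

section IndefiniteOrthogonal

variable {m n : Type*} [Fintype m] [Fintype n] [DecidableEq m] [DecidableEq n]
  {Y : Matrix (m ⊕ n) (m ⊕ n) ℝ}

theorem blocks_of_transpose_mul_signature_mul_self
    (hY : Yᵀ * fromBlocks 1 0 0 (-1) * Y = fromBlocks 1 0 0 (-1)) :
    Y.toBlocks₁₁ᵀ * Y.toBlocks₁₁ = 1 + Y.toBlocks₂₁ᵀ * Y.toBlocks₂₁ ∧
      Y.toBlocks₂₂ᵀ * Y.toBlocks₂₂ = 1 + Y.toBlocks₁₂ᵀ * Y.toBlocks₁₂ := by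
  rw [← fromBlocks_toBlocks Y] at hY
  simp only [fromBlocks_transpose, fromBlocks_multiply, Matrix.mul_one, Matrix.mul_neg,
    Matrix.neg_mul, Matrix.mul_zero, add_zero, zero_add, fromBlocks_inj] at hY
  obtain ⟨h₁₁, -, -, h₂₂⟩ := hY
  constructor
  · rw [← h₁₁]; abel
  · rw [← neg_neg (1 : Matrix n n ℝ), ← h₂₂]; abel

theorem det_sq_eq_one_of_transpose_mul_signature_mul_self
    (hY : Yᵀ * fromBlocks 1 0 0 (-1) * Y = fromBlocks 1 0 0 (-1)) : Y.det ^ 2 = 1 :=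
  det_sq_eq_one_of_transpose_mul_mul_self (by simp [det_fromBlocks_zero₂₁, det_neg]) hY

theorem det_toBlocks_ne_zero_of_transpose_mul_signature_mul_self
    (hY : Yᵀ * fromBlocks 1 0 0 (-1) * Y = fromBlocks 1 0 0 (-1)) :
    Y.toBlocks₁₁.det ≠ 0 ∧ Y.toBlocks₂₂.det ≠ 0 :=
  let ⟨h₁₁, h₂₂⟩ := blocks_of_transpose_mul_signature_mul_self hY
  ⟨det_ne_zero_of_transpose_mul_self_eq_one_add h₁₁,
    det_ne_zero_of_transpose_mul_self_eq_one_add h₂₂⟩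

end IndefiniteOrthogonal

theorem stmt_19_general {n : ℕ} (X : Matrix (Fin n ⊕ Fin n) (Fin n ⊕ Fin n) ℝ)
    (hconn : X ∈ connectedComponentIn
        {Y : Matrix (Fin n ⊕ Fin n) (Fin n ⊕ Fin n) ℝ |
          Yᵀ * fromBlocks 1 0 0 (-1) * Y = fromBlocks 1 0 0 (-1)} 1) :
    X.det = 1 ∧ 0 < (X.toBlocks₁₁).det ∧ 0 < (X.toBlocks₂₂).det := by
  set G := {Y : Matrix (Fin n ⊕ Fin n) (Fin n ⊕ Fin n) ℝ |
    Yᵀ * fromBlocks 1 0 0 (-1) * Y = fromBlocks 1 0 0 (-1)}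
  have hsign (f : Matrix (Fin n ⊕ Fin n) (Fin n ⊕ Fin n) ℝ → ℝ) (hf : Continuous f)
      (hG : ∀ Y ∈ G, f Y ≠ 0) (h₁ : f 1 = 1) : 0 < f X :=
    pos_of_mem_connectedComponentIn hf.continuousOn hG (h₁ ▸ one_pos) hconn
  have hdet : 0 < X.det := hsign _ continuous_id.matrix_det
    (fun _ hY h => by simpa [h] using det_sq_eq_one_of_transpose_mul_signature_mul_self hY)
    det_one
  refine ⟨(pow_eq_one_iff_of_nonneg hdet.le two_ne_zero).mp
    (det_sq_eq_one_of_transpose_mul_signature_mul_self (connectedComponentIn_subset G 1 hconn)),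
    ?_, ?_⟩
  · exact hsign _ continuous_det_toBlocks₁₁
      (fun _ hY => (det_toBlocks_ne_zero_of_transpose_mul_signature_mul_self hY).1)
      (by rw [← fromBlocks_one, toBlocks_fromBlocks₁₁, det_one])
  · exact hsign _ continuous_det_toBlocks₂₂
      (fun _ hY => (det_toBlocks_ne_zero_of_transpose_mul_signature_mul_self hY).2)
      (by rw [← fromBlocks_one, toBlocks_fromBlocks₂₂, det_one])

theorem stmt_19 {n : ℕ} (X : Matrix (Fin n ⊕ Fin n) (Fin n ⊕ Fin n) ℝ)
    (hG : Xᵀ * fromBlocks 1 0 0 (-1) * X = fromBlocks 1 0 0 (-1))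
    (hconn : X ∈ connectedComponentIn
        {Y : Matrix (Fin n ⊕ Fin n) (Fin n ⊕ Fin n) ℝ |
          Yᵀ * fromBlocks 1 0 0 (-1) * Y = fromBlocks 1 0 0 (-1)} 1) :
    X.det = 1 ∧ 0 < (X.toBlocks₁₁).det ∧ 0 < (X.toBlocks₂₂).det :=
  stmt_19_general X hconn
end
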